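/- arXiv:0810.0388 — 3 statements merged into one kernel-verified Lean document; each statement's English description precedes it below -/
import Mathlib

section
/- Let μ be a doubling measure on ℂ such that μ(D(z,R)) = 1 defines a positive radius ρ(z) for each z (e.g. μ = Δφ for φ subharmonic with doubling Laplacian). Then there exists γ > 0 depending only on the doubling constant of μ such that for every z ∈ ℂ and every r > 1, one has r^γ ≲ μ(D(z, rρ(z))) ≲ r^{1/γ}, with implicit constants depending only on the doubling constant of μ. -/
/-!
Iterating the doubling inequality from the unit-mass disc `D(z, ρ z)` gives
`μ(D(z, 2ⁿρ z)) ≤ Cdⁿ`. Conversely, each annulus `D(z, 2s) \ D(z, s)` contains a disc whose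
mass is at least `Cd⁻³ μ(D(z, s))`, so `μ(D(z, 2ⁿρ z)) ≥ (1 + Cd⁻³)ⁿ`. Squeezing `r` between
consecutive powers of two turns these geometric bounds in `n` into powers of `r`.
-/

open MeasureTheory Metric Complex Filter

noncomputable section

/-- `μ` is doubling with doubling constant (at most) `Cd`. -/
def DoublingWith (μ : Measure ℂ) (Cd : ℝ) : Prop :=
  ∀ z : ℂ, ∀ r : ℝ, 0 < r → μ (ball z (2 * r)) ≤ ENNReal.ofReal Cd * μ (ball z r)

/-- `ρ z` is the positive radius such that `μ (D(z, ρ z)) = 1`. -/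
def IsRadiusFn (μ : Measure ℂ) (ρ : ℂ → ℝ) : Prop :=
  ∀ z : ℂ, 0 < ρ z ∧ μ (ball z (ρ z)) = 1

namespace DoublingWith

variable {μ : Measure ℂ} {Cd : ℝ}

lemma mono (h : DoublingWith μ Cd) {Cd' : ℝ} (hle : Cd ≤ Cd') : DoublingWith μ Cd' :=
  fun z r hr => (h z r hr).trans (by gcongr)

lemma measure_ball_two_pow_mul_le (h : DoublingWith μ Cd) (z : ℂ) {r : ℝ} (hr : 0 < r) (n : ℕ) :
    μ (ball z (2 ^ n * r)) ≤ ENNReal.ofReal Cd ^ n * μ (ball z r) := by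
  induction n with
  | zero => simp
  | succ n ih =>
    calc μ (ball z (2 ^ (n + 1) * r)) = μ (ball z (2 * (2 ^ n * r))) := by ring_nf
      _ ≤ ENNReal.ofReal Cd * μ (ball z (2 ^ n * r)) := h z _ (by positivity)
      _ ≤ ENNReal.ofReal Cd * (ENNReal.ofReal Cd ^ n * μ (ball z r)) := by gcongr
      _ = ENNReal.ofReal Cd ^ (n + 1) * μ (ball z r) := by ring

/-- The witness disc is `D(w, r/2) ⊆ D(z, 2r) \ D(z, r)` with `|w - z| = 3r/2`; since
`D(z, r) ⊆ D(w, 4r)`, three doublings compare their masses. -/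
lemma mul_measure_ball_le_measure_ball_two_mul (h : DoublingWith μ Cd) (hCd : 0 < Cd)
    (z : ℂ) {r : ℝ} (hr : 0 < r) :
    ENNReal.ofReal (1 + (Cd ^ 3)⁻¹) * μ (ball z r) ≤ μ (ball z (2 * r)) := by
  set w : ℂ := z + ((3 * r / 2 : ℝ) : ℂ)
  have hdist : dist z w = 3 * r / 2 := by
    simp [w, abs_of_pos hr]
  have hdisj : Disjoint (ball z r) (ball w (r / 2)) := ball_disjoint_ball (by linarith)
  set k : ENNReal := ENNReal.ofReal Cd ^ 3
  have hk0 : k ≠ 0 := pow_ne_zero _ (ENNReal.ofReal_pos.2 hCd).ne'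
  have hktop : k ≠ ⊤ := ENNReal.pow_ne_top ENNReal.ofReal_ne_top
  have hcenter : μ (ball z r) ≤ k * μ (ball w (r / 2)) :=
    calc μ (ball z r) ≤ μ (ball w (2 ^ 3 * (r / 2))) :=
          measure_mono (ball_subset_ball' (by rw [hdist]; linarith))
      _ ≤ k * μ (ball w (r / 2)) := h.measure_ball_two_pow_mul_le w (by positivity) 3
  have hside : k⁻¹ * μ (ball z r) ≤ μ (ball w (r / 2)) := by
    rw [← ENNReal.mul_le_mul_iff_right hk0 hktop, ← mul_assoc, ENNReal.mul_inv_cancel hk0 hktop,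
      one_mul]
    exact hcenter
  have hfactor : ENNReal.ofReal (1 + (Cd ^ 3)⁻¹) = 1 + k⁻¹ := by
    rw [ENNReal.ofReal_add zero_le_one (by positivity), ENNReal.ofReal_one,
      ENNReal.ofReal_inv_of_pos (by positivity), ENNReal.ofReal_pow hCd.le]
  calc ENNReal.ofReal (1 + (Cd ^ 3)⁻¹) * μ (ball z r) = μ (ball z r) + k⁻¹ * μ (ball z r) := by
        rw [hfactor, add_mul, one_mul]
    _ ≤ μ (ball z r) + μ (ball w (r / 2)) := by gcongr
    _ = μ (ball z r ∪ ball w (r / 2)) := (measure_union hdisj measurableSet_ball).symm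
    _ ≤ μ (ball z (2 * r)) := measure_mono (Set.union_subset (ball_subset_ball (by linarith))
          (ball_subset_ball' (by rw [dist_comm, hdist]; linarith)))

lemma pow_mul_measure_ball_le (h : DoublingWith μ Cd) (hCd : 0 < Cd) (z : ℂ) {r : ℝ} (hr : 0 < r)
    (n : ℕ) :
    ENNReal.ofReal (1 + (Cd ^ 3)⁻¹) ^ n * μ (ball z r) ≤ μ (ball z (2 ^ n * r)) := by
  induction n with
  | zero => simp
  | succ n ih =>
    set t := ENNReal.ofReal (1 + (Cd ^ 3)⁻¹)
    calc t ^ (n + 1) * μ (ball z r) = t * (t ^ n * μ (ball z r)) := by ring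
      _ ≤ t * μ (ball z (2 ^ n * r)) := by gcongr
      _ ≤ μ (ball z (2 * (2 ^ n * r))) :=
          h.mul_measure_ball_le_measure_ball_two_mul hCd z (by positivity)
      _ = μ (ball z (2 ^ (n + 1) * r)) := by ring_nf

end DoublingWith

lemma two_pow_rpow_logb {a : ℝ} (ha : 0 < a) (n : ℕ) : ((2 : ℝ) ^ n) ^ Real.logb 2 a = a ^ n := by
  rw [← Real.rpow_natCast_mul zero_le_two, mul_comm, Real.rpow_mul_natCast zero_le_two,
    Real.rpow_logb two_pos (by norm_num) ha]

lemma Monotone.le_ofReal_mul_rpow_logb {f : ℝ → ENNReal} (hf : Monotone f) {a : ℝ} (ha : 1 ≤ a)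
    (h : ∀ n : ℕ, f (2 ^ n) ≤ ENNReal.ofReal (a ^ n)) {r : ℝ} (hr : 1 ≤ r) :
    f r ≤ ENNReal.ofReal (a * r ^ Real.logb 2 a) := by
  obtain ⟨n, hn, hn'⟩ := exists_nat_pow_near hr one_lt_two
  calc f r ≤ f (2 ^ (n + 1)) := hf hn'.le
    _ ≤ ENNReal.ofReal (a * ((2 : ℝ) ^ n) ^ Real.logb 2 a) := by
        rw [two_pow_rpow_logb (by linarith), ← pow_succ']
        exact h (n + 1)
    _ ≤ ENNReal.ofReal (a * r ^ Real.logb 2 a) := by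
        gcongr
        exact Real.logb_nonneg one_lt_two ha

lemma Monotone.ofReal_inv_mul_rpow_logb_le {f : ℝ → ENNReal} (hf : Monotone f) {t : ℝ}
    (ht : 1 ≤ t) (h : ∀ n : ℕ, ENNReal.ofReal (t ^ n) ≤ f (2 ^ n)) {r : ℝ} (hr : 1 ≤ r) :
    ENNReal.ofReal (t⁻¹ * r ^ Real.logb 2 t) ≤ f r := by
  obtain ⟨n, hn, hn'⟩ := exists_nat_pow_near hr one_lt_two
  have ht0 : 0 < t := by linarith
  calc ENNReal.ofReal (t⁻¹ * r ^ Real.logb 2 t)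
      ≤ ENNReal.ofReal (t⁻¹ * ((2 : ℝ) ^ (n + 1)) ^ Real.logb 2 t) := by
        gcongr
        exact Real.logb_nonneg one_lt_two ht
    _ = ENNReal.ofReal (t ^ n) := by
        rw [two_pow_rpow_logb ht0, pow_succ', inv_mul_cancel_left₀ ht0.ne']
    _ ≤ f (2 ^ n) := h n
    _ ≤ f r := hf hn

/-- for a doubling measure `μ` with unit-mass radius function `ρ`,
there is `γ > 0` depending only on the doubling constant such that
`r^γ ≲ μ(D(z, rρ(z))) ≲ r^{1/γ}` for every `z ∈ ℂ` and `r > 1`. -/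
theorem doubling_measure_dilated_ball_growth :
    ∀ Cd : ℝ, ∃ γ c C : ℝ, 0 < γ ∧ 0 < c ∧ 0 < C ∧
      ∀ (μ : Measure ℂ) (ρ : ℂ → ℝ), DoublingWith μ Cd → IsRadiusFn μ ρ →
        ∀ z : ℂ, ∀ r : ℝ, 1 < r →
          ENNReal.ofReal (c * r ^ γ) ≤ μ (ball z (r * ρ z)) ∧
            μ (ball z (r * ρ z)) ≤ ENNReal.ofReal (C * r ^ (1 / γ)) := by
  intro Cd
  -- Enlarging the doubling constant to `D ≥ 2` makes both exponents `logb 2 t`, `logb 2 D` positive.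
  set D := max Cd 2
  have hD : 1 < D := lt_max_of_lt_right one_lt_two
  set t := 1 + (D ^ 3)⁻¹
  have ht : 1 < t := lt_add_of_pos_right 1 (by positivity)
  have hlogt : 0 < Real.logb 2 t := Real.logb_pos one_lt_two ht
  have hlogD : 0 < Real.logb 2 D := Real.logb_pos one_lt_two hD
  set γ := min (Real.logb 2 t) (Real.logb 2 D)⁻¹
  have hγ : 0 < γ := lt_min hlogt (inv_pos.2 hlogD)
  refine ⟨γ, t⁻¹, D, hγ, by positivity, by positivity, fun μ ρ hμ hρ z r hr => ?_⟩
  have hμD : DoublingWith μ D := hμ.mono (le_max_left _ _)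
  obtain ⟨hρz, hρ1⟩ := hρ z
  have hf : Monotone fun s => μ (ball z (s * ρ z)) :=
    fun s s' hs => measure_mono (ball_subset_ball (by gcongr))
  constructor
  · refine le_trans ?_ (hf.ofReal_inv_mul_rpow_logb_le ht.le (fun n => ?_) hr.le)
    · gcongr
      exacts [hr.le, min_le_left _ _]
    · simpa [hρ1, ENNReal.ofReal_pow (zero_le_one.trans ht.le)] using
        hμD.pow_mul_measure_ball_le (by positivity) z hρz n
  · refine (hf.le_ofReal_mul_rpow_logb hD.le (fun n => ?_) hr.le).trans ?_
    · simpa [hρ1, ENNReal.ofReal_pow (zero_le_one.trans hD.le)] using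
        hμD.measure_ball_two_pow_mul_le z hρz n
    · gcongr
      · exact hr.le
      · rw [one_div, le_inv_comm₀ hlogD hγ]
        exact min_le_right _ _
end
end

section
/- Let φ be a subharmonic function on ℂ with Δφ a doubling measure, and let ρ(z) be the positive radius with Δφ(D(z,ρ(z))) = 1. Then there exist constants η, C > 0 and 0 < β < 1 such that C^{−1} |z|^{−η} ≤ ρ(z) ≤ C |z|^β for all |z| > 1. -/
/-!
Doubling gives `μ(D(z, R)) ≤ (2R/r)^b μ(D(z, r))` for `r ≤ R`, and in the plane it also gives
reverse doubling, hence `(R/2r)^a μ(D(z, r)) ≤ μ(D(z, R))`, with exponents `0 < a < b`.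
Comparing the unit-mass disks `D(z, ρ z)` and `D(0, ρ 0)` inside a disk of radius `≍ |z|`
centred at either point, the upper bound on the mass of one and the lower bound on the mass of
the other pin `ρ z` between `|z|^(-b/a)` and `|z|^(1-a/b)` up to constants.
-/

open MeasureTheory Metric Complex Filter

noncomputable section

/-- Pointwise Laplacian of a function on `ℂ ≃ ℝ²`. -/
def lap (f : ℂ → ℝ) (z : ℂ) : ℝ :=
  iteratedFDeriv ℝ 2 f z ![1, 1] + iteratedFDeriv ℝ 2 f z ![Complex.I, Complex.I]

/-- `φ` is subharmonic on `ℂ`: upper semicontinuous, locally integrable, and satisfies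
the sub-mean value inequality on disks. -/
def Subharmonic (φ : ℂ → ℝ) : Prop :=
  UpperSemicontinuous φ ∧ LocallyIntegrable φ volume ∧
    ∀ z : ℂ, ∀ r : ℝ, 0 < r → φ z ≤ ⨍ w in ball z r, φ w ∂volume

/-- `μ` is the distributional Laplacian of `φ`. -/
def IsLaplacianOf (μ : Measure ℂ) (φ : ℂ → ℝ) : Prop :=
  ∀ ψ : ℂ → ℝ, ContDiff ℝ (⊤ : ℕ∞) ψ → HasCompactSupport ψ →
    ∫ z : ℂ, lap ψ z * φ z = ∫ z : ℂ, ψ z ∂μ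

def ReverseDoublingWith (μ : Measure ℂ) (c : ℝ) : Prop :=
  ∀ z : ℂ, ∀ r : ℝ, 0 < r → ENNReal.ofReal c * μ (ball z r) ≤ μ (ball z (2 * r))

section Doubling

variable {μ : Measure ℂ}

theorem DoublingWith.mono_s10 {C C' : ℝ} (h : DoublingWith μ C) (hC : C ≤ C') :
    DoublingWith μ C' := fun z r hr =>
  (h z r hr).trans (by gcongr)

theorem DoublingWith.measure_ball_two_pow_mul_le_s10 {C : ℝ} (h : DoublingWith μ C) (z : ℂ)
    {r : ℝ} (hr : 0 < r) (n : ℕ) :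
    μ (ball z (2 ^ n * r)) ≤ ENNReal.ofReal C ^ n * μ (ball z r) := by
  induction n with
  | zero => simp
  | succ n ih =>
    calc μ (ball z (2 ^ (n + 1) * r)) = μ (ball z (2 * (2 ^ n * r))) := by
          rw [pow_succ', mul_assoc]
      _ ≤ ENNReal.ofReal C * μ (ball z (2 ^ n * r)) := h z _ (by positivity)
      _ ≤ ENNReal.ofReal C * (ENNReal.ofReal C ^ n * μ (ball z r)) := by gcongr
      _ = ENNReal.ofReal C ^ (n + 1) * μ (ball z r) := by rw [pow_succ', mul_assoc]

theorem ReverseDoublingWith.pow_mul_measure_ball_le {c : ℝ} (h : ReverseDoublingWith μ c)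
    (z : ℂ) {r : ℝ} (hr : 0 < r) (n : ℕ) :
    ENNReal.ofReal c ^ n * μ (ball z r) ≤ μ (ball z (2 ^ n * r)) := by
  induction n with
  | zero => simp
  | succ n ih =>
    calc ENNReal.ofReal c ^ (n + 1) * μ (ball z r)
        = ENNReal.ofReal c * (ENNReal.ofReal c ^ n * μ (ball z r)) := by
          rw [pow_succ', mul_assoc]
      _ ≤ ENNReal.ofReal c * μ (ball z (2 ^ n * r)) := by gcongr
      _ ≤ μ (ball z (2 * (2 ^ n * r))) := h z _ (by positivity)
      _ = μ (ball z (2 ^ (n + 1) * r)) := by rw [pow_succ', mul_assoc]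

/-- The disk `D(w, r/2)` with `|w - z| = 3r/2` is disjoint from `D(z, r)` and lies in
`D(z, 2r)`, while its eightfold enlargement covers `D(z, r)`. -/
theorem DoublingWith.reverseDoublingWith {C : ℝ} (h : DoublingWith μ C) (hC : 0 < C) :
    ReverseDoublingWith μ (1 + C⁻¹ ^ 3) := by
  intro z r hr
  set w : ℂ := z + (3 * r / 2 : ℝ)
  have hzw : dist z w = 3 * r / 2 := by
    simp [w, abs_of_pos hr]
  have hcover : μ (ball z r) ≤ ENNReal.ofReal C ^ 3 * μ (ball w (r / 2)) :=
    (measure_mono (ball_subset_ball' (by rw [hzw]; linarith))).trans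
      (h.measure_ball_two_pow_mul_le_s10 w (by positivity) 3)
  have hsmall : ENNReal.ofReal (C⁻¹ ^ 3) * μ (ball z r) ≤ μ (ball w (r / 2)) := by
    rw [ENNReal.ofReal_pow (by positivity), ENNReal.ofReal_inv_of_pos hC, ← ENNReal.inv_pow,
      ENNReal.inv_mul_le_iff (by simp [hC]) (by simp)]
    exact hcover
  calc ENNReal.ofReal (1 + C⁻¹ ^ 3) * μ (ball z r)
      = μ (ball z r) + ENNReal.ofReal (C⁻¹ ^ 3) * μ (ball z r) := by
        rw [ENNReal.ofReal_add zero_le_one (by positivity), ENNReal.ofReal_one, add_mul, one_mul]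
    _ ≤ μ (ball z r) + μ (ball w (r / 2)) := by gcongr
    _ = μ (ball z r ∪ ball w (r / 2)) :=
        (measure_union (ball_disjoint_ball (by rw [hzw]; linarith)) measurableSet_ball).symm
    _ ≤ μ (ball z (2 * r)) := measure_mono <| Set.union_subset (ball_subset_ball (by linarith))
        (ball_subset_ball' (by rw [dist_comm, hzw]; linarith))

theorem DoublingWith.measure_ball_le_rpow_mul {b : ℝ} (h : DoublingWith μ (2 ^ b)) (hb : 0 ≤ b)
    (z : ℂ) {r R : ℝ} (hr : 0 < r) (hrR : r ≤ R) :
    μ (ball z R) ≤ ENNReal.ofReal ((2 * R / r) ^ b) * μ (ball z r) := by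
  obtain ⟨n, hn, hn'⟩ := exists_nat_pow_near ((one_le_div hr).2 hrR) one_lt_two
  have hpow : (2 : ℝ) ^ (n + 1) ≤ 2 * R / r := by
    rw [pow_succ', mul_div_assoc]; gcongr
  calc μ (ball z R) ≤ μ (ball z (2 ^ (n + 1) * r)) :=
        measure_mono (ball_subset_ball ((div_lt_iff₀ hr).1 hn').le)
    _ ≤ ENNReal.ofReal (2 ^ b) ^ (n + 1) * μ (ball z r) :=
        h.measure_ball_two_pow_mul_le_s10 z hr _
    _ ≤ ENNReal.ofReal ((2 * R / r) ^ b) * μ (ball z r) := by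
        rw [← ENNReal.ofReal_pow (by positivity), Real.rpow_pow_comm zero_le_two]
        gcongr

theorem ReverseDoublingWith.rpow_mul_measure_ball_le {a : ℝ} (h : ReverseDoublingWith μ (2 ^ a))
    (ha : 0 ≤ a) (z : ℂ) {r R : ℝ} (hr : 0 < r) (hrR : r ≤ R) :
    ENNReal.ofReal ((R / (2 * r)) ^ a) * μ (ball z r) ≤ μ (ball z R) := by
  obtain ⟨n, hn, hn'⟩ := exists_nat_pow_near ((one_le_div hr).2 hrR) one_lt_two
  have hR : 0 < R := hr.trans_le hrR
  have hpow : R / (2 * r) ≤ 2 ^ n := by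
    rw [div_le_iff₀ (by positivity)]
    rw [div_lt_iff₀ hr, pow_succ] at hn'
    linarith
  calc ENNReal.ofReal ((R / (2 * r)) ^ a) * μ (ball z r)
      ≤ ENNReal.ofReal (2 ^ a) ^ n * μ (ball z r) := by
        rw [← ENNReal.ofReal_pow (by positivity), Real.rpow_pow_comm zero_le_two]
        gcongr
    _ ≤ μ (ball z (2 ^ n * r)) := h.pow_mul_measure_ball_le z hr n
    _ ≤ μ (ball z R) := measure_mono (ball_subset_ball ((le_div_iff₀ hr).1 hn))

theorem DoublingWith.exists_exponents {Cd : ℝ} (h : DoublingWith μ Cd) :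
    ∃ a b : ℝ, 0 < a ∧ a < b ∧ DoublingWith μ (2 ^ b) ∧ ReverseDoublingWith μ (2 ^ a) := by
  set K := max Cd 4
  have hK : 4 ≤ K := le_max_right _ _
  set δ := 1 + K⁻¹ ^ 3
  have hδ1 : 1 < δ := by simp only [δ]; linarith [show 0 < K⁻¹ ^ 3 by positivity]
  have hδ2 : δ ≤ 2 := by
    have : K⁻¹ ^ 3 ≤ 1 := pow_le_one₀ (by positivity) (inv_le_one_of_one_le₀ (by linarith))
    simp only [δ]; linarith
  refine ⟨Real.logb 2 δ, Real.logb 2 K, Real.logb_pos one_lt_two hδ1, ?_, ?_, ?_⟩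
  · calc Real.logb 2 δ ≤ Real.logb 2 2 := Real.logb_le_logb_of_le one_lt_two (by linarith) hδ2
      _ < Real.logb 2 4 := Real.logb_lt_logb one_lt_two two_pos (by norm_num)
      _ ≤ Real.logb 2 K := Real.logb_le_logb_of_le one_lt_two (by norm_num) hK
  · rw [Real.rpow_logb two_pos (by norm_num) (by linarith)]
    exact h.mono_s10 (le_max_left _ _)
  · rw [Real.rpow_logb two_pos (by norm_num) (by linarith)]
    exact (h.mono_s10 (le_max_left _ _)).reverseDoublingWith (by linarith)

/-- With `R = |z - w| + r'`, the mass of `D(z, ·)` is at least `1` from radius `2R` on, so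
reverse doubling forces `r ≤ 4R`; then `D(w, R) ⊆ D(z, 4R)` and the reverse doubling lower bound
for the mass of the former meets the doubling upper bound for the latter. -/
theorem mul_rpow_le_of_measure_ball_eq_one {a b : ℝ} (hD : DoublingWith μ (2 ^ b))
    (hR : ReverseDoublingWith μ (2 ^ a)) (ha : 0 < a) (hb : 0 < b) {z w : ℂ} {r r' : ℝ}
    (hr : 0 < r) (hr' : 0 < r') (hz : μ (ball z r) = 1) (hw : μ (ball w r') = 1) :
    r * ((dist z w + r') / (2 * r')) ^ (a / b) ≤ 8 * (dist z w + r') := by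
  set R := dist z w + r'
  have hr'R : r' ≤ R := le_add_of_nonneg_left dist_nonneg
  have hR0 : 0 < R := hr'.trans_le hr'R
  have hwz : ball w R ⊆ ball z (4 * R) :=
    ball_subset_ball' (by rw [dist_comm w z]; linarith [dist_nonneg (x := z) (y := w)])
  have hr4R : r ≤ 4 * R := by
    by_contra! hlt
    have hone : 1 ≤ μ (ball z (2 * R)) := by
      rw [← hw]
      exact measure_mono <|
        ball_subset_ball' (by rw [dist_comm w z]; linarith [dist_nonneg (x := z) (y := w)])
    have hgrow := hR.rpow_mul_measure_ball_le ha.le z (by positivity) (by linarith : 2 * R ≤ r)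
    rw [hz] at hgrow
    have hbig : 1 < (r / (2 * (2 * R))) ^ a :=
      Real.one_lt_rpow ((one_lt_div (by positivity)).2 (by linarith)) ha
    have := (ENNReal.one_lt_ofReal.2 hbig).trans_le (le_mul_of_one_le_right' hone)
    exact this.not_ge hgrow
  have hmass : ((R / (2 * r')) ^ a) ≤ (8 * R / r) ^ b := by
    rw [← ENNReal.ofReal_le_ofReal_iff (by positivity)]
    calc ENNReal.ofReal ((R / (2 * r')) ^ a)
        = ENNReal.ofReal ((R / (2 * r')) ^ a) * μ (ball w r') := by rw [hw, mul_one]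
      _ ≤ μ (ball w R) := hR.rpow_mul_measure_ball_le ha.le w hr' hr'R
      _ ≤ μ (ball z (4 * R)) := measure_mono hwz
      _ ≤ ENNReal.ofReal ((2 * (4 * R) / r) ^ b) * μ (ball z r) :=
          hD.measure_ball_le_rpow_mul hb.le z hr hr4R
      _ = ENNReal.ofReal ((8 * R / r) ^ b) := by rw [hz, mul_one]; ring_nf
  have hroot : (R / (2 * r')) ^ (a / b) ≤ 8 * R / r := by
    rw [div_eq_mul_inv a b, Real.rpow_mul (by positivity),
      Real.rpow_inv_le_iff_of_pos (by positivity) (by positivity) hb]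
    exact hmass
  rwa [le_div_iff₀ hr, mul_comm] at hroot

end Doubling

theorem le_mul_rpow_one_sub_of_mul_rpow_le {r r' s t : ℝ} (hr' : 0 < r') (hs : 1 ≤ s)
    (ht0 : 0 ≤ t) (ht : t ≤ 1) (h : r * ((s + r') / (2 * r')) ^ t ≤ 8 * (s + r')) :
    r ≤ 8 * (2 * r') ^ t * (1 + r') * s ^ (1 - t) := by
  have hu : 0 < s + r' := by linarith
  have hr : r ≤ 8 * (2 * r') ^ t * (s + r') ^ (1 - t) := by
    refine ((le_div_iff₀ (by positivity)).2 h).trans_eq ?_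
    rw [Real.div_rpow hu.le (by positivity), Real.rpow_sub hu, Real.rpow_one]
    field_simp
  calc r ≤ 8 * (2 * r') ^ t * ((1 + r') * s) ^ (1 - t) := by
        refine hr.trans ?_
        gcongr
        nlinarith
    _ = 8 * (2 * r') ^ t * ((1 + r') ^ (1 - t) * s ^ (1 - t)) := by
        rw [Real.mul_rpow (x := 1 + r') (by positivity) (by positivity)]
    _ ≤ 8 * (2 * r') ^ t * ((1 + r') * s ^ (1 - t)) := by
        gcongr
        calc (1 + r') ^ (1 - t) ≤ (1 + r') ^ (1 : ℝ) :=
              Real.rpow_le_rpow_of_exponent_le (by linarith) (by linarith)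
          _ = 1 + r' := Real.rpow_one _
    _ = 8 * (2 * r') ^ t * (1 + r') * s ^ (1 - t) := by ring

theorem rpow_neg_inv_le_mul_of_mul_rpow_le {r r' s t : ℝ} (hr : 0 < r) (hr' : 0 < r')
    (hs : 1 ≤ s) (ht : 0 < t) (h : r * ((s + r') / (2 * r')) ^ t ≤ 8 * (s + r')) :
    s ^ (-t⁻¹) ≤ max 1 (2 * (16 / r) ^ t⁻¹) * r' := by
  have hs0 : 0 < s := by linarith
  rcases le_or_gt 1 r' with hr'1 | hr'1
  · calc s ^ (-t⁻¹) ≤ 1 := Real.rpow_le_one_of_one_le_of_nonpos hs (by simp [ht.le])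
      _ ≤ max 1 (2 * (16 / r) ^ t⁻¹) * r' := one_le_mul_of_one_le_of_one_le (le_max_left _ _) hr'1
  have hpow : (s / (2 * r')) ^ t ≤ 16 / r * s := by
    rw [div_mul_eq_mul_div, le_div_iff₀ hr]
    calc (s / (2 * r')) ^ t * r ≤ ((s + r') / (2 * r')) ^ t * r := by gcongr; linarith
      _ ≤ 8 * (s + r') := by linarith
      _ ≤ 16 * s := by linarith
  have hroot : s / (2 * r') ≤ (16 / r) ^ t⁻¹ * s ^ t⁻¹ := by
    rw [← Real.mul_rpow (by positivity) hs0.le,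
      Real.le_rpow_inv_iff_of_pos (by positivity) (by positivity) ht]
    exact hpow
  calc s ^ (-t⁻¹) ≤ s ^ (1 - t⁻¹) := Real.rpow_le_rpow_of_exponent_le hs (by linarith)
    _ = s / s ^ t⁻¹ := by rw [Real.rpow_sub hs0, Real.rpow_one]
    _ ≤ 2 * (16 / r) ^ t⁻¹ * r' := by
        rw [div_le_iff₀ (by positivity)]
        rw [div_le_iff₀ (by positivity)] at hroot
        linarith
    _ ≤ max 1 (2 * (16 / r) ^ t⁻¹) * r' := by gcongr; exact le_max_right _ _

theorem rho_polynomial_growth_bounds_general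
    (Cd : ℝ) (μ : Measure ℂ) (ρ : ℂ → ℝ)
    (hdbl : DoublingWith μ Cd)
    (hρ : IsRadiusFn μ ρ) :
    ∃ η C β : ℝ, 0 < η ∧ 0 < C ∧ 0 < β ∧ β < 1 ∧
      ∀ z : ℂ, 1 < ‖z‖ →
        C⁻¹ * ‖z‖ ^ (-η) ≤ ρ z ∧ ρ z ≤ C * ‖z‖ ^ β := by
  obtain ⟨a, b, ha, hab, hD, hR⟩ := hdbl.exists_exponents
  have hb : 0 < b := ha.trans hab
  have ht : 0 < a / b := div_pos ha hb
  have ht1 : a / b < 1 := (div_lt_one hb).2 hab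
  obtain ⟨hρ0, hμ0⟩ := hρ 0
  set C := max (max 1 (2 * (16 / ρ 0) ^ (a / b)⁻¹)) (8 * (2 * ρ 0) ^ (a / b) * (1 + ρ 0))
  have hC : 1 ≤ C := (le_max_left _ _).trans (le_max_left _ _)
  refine ⟨(a / b)⁻¹, C, 1 - a / b, inv_pos.2 ht, by positivity, by linarith, by linarith, ?_⟩
  intro z hz
  obtain ⟨hρz, hμz⟩ := hρ z
  constructor
  · have key := mul_rpow_le_of_measure_ball_eq_one hD hR ha hb hρ0 hρz hμ0 hμz
    rw [dist_zero_left] at key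
    rw [inv_mul_le_iff₀ (by positivity)]
    exact (rpow_neg_inv_le_mul_of_mul_rpow_le hρ0 hρz hz.le ht key).trans
      (by gcongr; exact le_max_left _ _)
  · have key := mul_rpow_le_of_measure_ball_eq_one hD hR ha hb hρz hρ0 hμz hμ0
    rw [dist_zero_right] at key
    exact (le_mul_rpow_one_sub_of_mul_rpow_le hρ0 hz.le ht.le ht1.le key).trans
      (by gcongr; exact le_max_right _ _)

/-- MMO03, Remark 1: there are constants `η, C > 0` and `0 < β < 1`
such that `C⁻¹ |z|^{-η} ≤ ρ(z) ≤ C |z|^β` for `|z| > 1`. -/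
theorem rho_polynomial_growth_bounds
    (Cd : ℝ) (φ : ℂ → ℝ) (μ : Measure ℂ) (ρ : ℂ → ℝ)
    (hsub : Subharmonic φ) (hlap : IsLaplacianOf μ φ) (hdbl : DoublingWith μ Cd)
    (hρ : IsRadiusFn μ ρ) :
    ∃ η C β : ℝ, 0 < η ∧ 0 < C ∧ 0 < β ∧ β < 1 ∧
      ∀ z : ℂ, 1 < ‖z‖ →
        C⁻¹ * ‖z‖ ^ (-η) ≤ ρ z ∧ ρ z ≤ C * ‖z‖ ^ β :=
  rho_polynomial_growth_bounds_general Cd μ ρ hdbl hρ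
end
end

section
/- Let φ be a subharmonic function on ℂ with Δφ a doubling measure, and let ρ(z) be the positive radius with Δφ(D(z,ρ(z))) = 1. There exists 0 < δ < 1, depending only on the doubling constant of Δφ, such that whenever ζ ∉ D(z) = D(z, ρ(z)), one has ρ(z)/ρ(ζ) ≲ (|z−ζ|/ρ(ζ))^{1−δ}, with implicit constant depending only on the doubling constant of Δφ. -/
open MeasureTheory Metric Complex Filter

noncomputable section

private lemma doubling_pow {μ : Measure ℂ} {A : ℝ} (hD : DoublingWith μ A)
    (x : ℂ) (s : ℝ) (hs : 0 < s) (k : ℕ) :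
    μ (ball x (2 ^ k * s)) ≤ ENNReal.ofReal A ^ k * μ (ball x s) := by
  induction k with
  | zero => simp
  | succ k ih =>
    have h2 : (2:ℝ) ^ (k+1) * s = 2 * (2 ^ k * s) := by ring
    rw [h2, pow_succ]
    calc μ (ball x (2 * (2 ^ k * s))) ≤ ENNReal.ofReal A * μ (ball x (2 ^ k * s)) :=
          hD x _ (by positivity)
      _ ≤ ENNReal.ofReal A * (ENNReal.ofReal A ^ k * μ (ball x s)) := mul_le_mul_right ih _
      _ = ENNReal.ofReal A ^ k * ENNReal.ofReal A * μ (ball x s) := by ring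

private lemma reverse_step {μ : Measure ℂ} {A : ℝ} (hA : 0 < A) (hD : DoublingWith μ A)
    (x : ℂ) (r : ℝ) (hr : 0 < r) :
    ENNReal.ofReal (1 + A⁻¹ ^ 3) * μ (ball x r) ≤ μ (ball x (2 * r)) := by
  set y : ℂ := x + ((3 * r / 2 : ℝ) : ℂ) with hy
  have hxy : dist y x = 3 * r / 2 := by
    rw [dist_eq_norm, hy]
    have : x + ((3 * r / 2 : ℝ) : ℂ) - x = ((3 * r / 2 : ℝ) : ℂ) := by ring
    rw [this, Complex.norm_real, Real.norm_eq_abs]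
    exact abs_of_pos (by positivity)
  have h1 : ball y (r / 2) ⊆ ball x (2 * r) := by
    intro w hw
    rw [mem_ball] at hw ⊢
    calc dist w x ≤ dist w y + dist y x := dist_triangle _ _ _
      _ < r / 2 + 3 * r / 2 := by rw [hxy]; linarith [hw]
      _ = 2 * r := by ring
  have h3 : ball x r ⊆ ball y (2 ^ 3 * (r / 2)) := by
    intro w hw
    rw [mem_ball] at hw ⊢
    have := dist_triangle w x y
    rw [dist_comm y x] at hxy
    calc dist w y ≤ dist w x + dist x y := dist_triangle _ _ _
      _ < r + 3 * r / 2 := by rw [hxy]; linarith [hw]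
      _ ≤ 2 ^ 3 * (r / 2) := by linarith
  have h2 : Disjoint (ball x r) (ball y (r / 2)) := by
    rw [Set.disjoint_left]
    intro w hwx hwy
    rw [mem_ball] at hwx hwy
    have := dist_triangle y w x
    rw [dist_comm w y] at hwy
    rw [hxy] at this
    linarith
  have hb : μ (ball x r) ≤ ENNReal.ofReal A ^ 3 * μ (ball y (r / 2)) :=
    (measure_mono h3).trans (doubling_pow hD y (r / 2) (by positivity) 3)
  have hyb : ENNReal.ofReal (A⁻¹ ^ 3) * μ (ball x r) ≤ μ (ball y (r / 2)) := by
    calc ENNReal.ofReal (A⁻¹ ^ 3) * μ (ball x r)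
        ≤ ENNReal.ofReal (A⁻¹ ^ 3) * (ENNReal.ofReal A ^ 3 * μ (ball y (r / 2))) :=
          mul_le_mul_right hb _
      _ = ENNReal.ofReal (A⁻¹ ^ 3) * ENNReal.ofReal (A ^ 3) * μ (ball y (r / 2)) := by
          rw [← ENNReal.ofReal_pow hA.le, mul_assoc]
      _ = ENNReal.ofReal (A⁻¹ ^ 3 * A ^ 3) * μ (ball y (r / 2)) := by
          rw [ENNReal.ofReal_mul (by positivity)]
      _ = μ (ball y (r / 2)) := by
          rw [show A⁻¹ ^ 3 * A ^ 3 = 1 by field_simp, ENNReal.ofReal_one, one_mul]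
  calc ENNReal.ofReal (1 + A⁻¹ ^ 3) * μ (ball x r)
      = μ (ball x r) + ENNReal.ofReal (A⁻¹ ^ 3) * μ (ball x r) := by
        rw [ENNReal.ofReal_add (by norm_num) (by positivity), ENNReal.ofReal_one, add_mul, one_mul]
    _ ≤ μ (ball x r) + μ (ball y (r / 2)) := add_le_add le_rfl hyb
    _ = μ (ball x r ∪ ball y (r / 2)) := (measure_union h2 measurableSet_ball).symm
    _ ≤ μ (ball x (2 * r)) := measure_mono (Set.union_subset (ball_subset_ball (by linarith)) h1)

private lemma reverse_pow {μ : Measure ℂ} {A : ℝ} (hA : 0 < A) (hD : DoublingWith μ A)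
    (x : ℂ) (s : ℝ) (hs : 0 < s) (k : ℕ) :
    ENNReal.ofReal (1 + A⁻¹ ^ 3) ^ k * μ (ball x s) ≤ μ (ball x (2 ^ k * s)) := by
  induction k with
  | zero => simp
  | succ k ih =>
    have h2 : (2:ℝ) ^ (k+1) * s = 2 * (2 ^ k * s) := by ring
    rw [h2, pow_succ]
    calc ENNReal.ofReal (1 + A⁻¹ ^ 3) ^ k * ENNReal.ofReal (1 + A⁻¹ ^ 3) * μ (ball x s)
        = ENNReal.ofReal (1 + A⁻¹ ^ 3) * (ENNReal.ofReal (1 + A⁻¹ ^ 3) ^ k * μ (ball x s)) := by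
          ring
      _ ≤ ENNReal.ofReal (1 + A⁻¹ ^ 3) * μ (ball x (2 ^ k * s)) := mul_le_mul_right ih _
      _ ≤ μ (ball x (2 * (2 ^ k * s))) := reverse_step hA hD x _ (by positivity)

/-- Christ: there is `0 < δ < 1`, depending only on the doubling
constant of `Δφ`, such that if `ζ ∉ D(z, ρ(z))` then
`ρ(z)/ρ(ζ) ≲ (|z-ζ|/ρ(ζ))^{1-δ}`. -/
theorem rho_quotient_bound :
    ∀ Cd : ℝ, ∃ δ C : ℝ, 0 < δ ∧ δ < 1 ∧ 0 < C ∧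
      ∀ (φ : ℂ → ℝ) (μ : Measure ℂ) (ρ : ℂ → ℝ),
        Subharmonic φ → IsLaplacianOf μ φ → DoublingWith μ Cd → IsRadiusFn μ ρ →
        ∀ z ζ : ℂ, ζ ∉ ball z (ρ z) →
          ρ z / ρ ζ ≤ C * (‖z - ζ‖ / ρ ζ) ^ (1 - δ) := by
  intro Cd
  set A : ℝ := max Cd 2 with hAdef
  have hA2 : (2:ℝ) ≤ A := le_max_right _ _
  have hA0 : (0:ℝ) < A := by linarith
  set a : ℝ := 1 + A⁻¹ ^ 3 with hadef
  have ha1 : (1:ℝ) < a := by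
    rw [hadef]
    have : (0:ℝ) < A⁻¹ ^ 3 := by positivity
    linarith
  have haA : a < A := by
    rw [hadef]
    have hinv : A⁻¹ ≤ 2⁻¹ := by
      rw [inv_le_inv₀ hA0 (by norm_num)]; exact hA2
    have : A⁻¹ ^ 3 ≤ 2⁻¹ ^ 3 := by
      apply pow_le_pow_left₀ (by positivity) hinv
    have h2 : (2:ℝ)⁻¹ ^ 3 = 1/8 := by norm_num
    nlinarith
  have hlogA : 0 < Real.log A := Real.log_pos (by linarith)
  have hloga : 0 < Real.log a := Real.log_pos ha1
  set δ : ℝ := Real.log a / Real.log A with hδdef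
  have hδ0 : 0 < δ := div_pos hloga hlogA
  have hδ1 : δ < 1 := by
    rw [hδdef, div_lt_one hlogA]
    exact Real.log_lt_log (by linarith) haA
  refine ⟨δ, 6, hδ0, hδ1, by norm_num, ?_⟩
  intro φ μ ρ _ _ hDCd hρ z ζ hζ
  obtain ⟨hρz, hμz⟩ := hρ z
  obtain ⟨hρζ, hμζ⟩ := hρ ζ
  have hD : DoublingWith μ A := fun w r hr =>
    (hDCd w r hr).trans
      (mul_le_mul_left (ENNReal.ofReal_le_ofReal (le_max_left _ _)) _)
  set d : ℝ := ‖z - ζ‖ with hddef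
  have hdz : ρ z ≤ d := by
    rw [mem_ball, dist_eq_norm] at hζ
    push_neg at hζ
    rwa [← norm_neg, neg_sub] at hζ
  have hd0 : 0 < d := lt_of_lt_of_le hρz hdz
  by_cases hcase : d ≤ ρ ζ
  · -- trivial case
    set t : ℝ := d / ρ ζ with htdef
    have ht0 : 0 < t := div_pos hd0 hρζ
    have ht1 : t ≤ 1 := (div_le_one hρζ).mpr hcase
    have h1 : ρ z / ρ ζ ≤ t := by
      rw [htdef]
      gcongr
    have h2 : t ≤ t ^ (1 - δ) := by
      nth_rewrite 1 [← Real.rpow_one t]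
      exact Real.rpow_le_rpow_of_exponent_ge ht0 ht1 (by linarith)
    have h3 : (0:ℝ) ≤ t ^ (1 - δ) := Real.rpow_nonneg ht0.le _
    calc ρ z / ρ ζ ≤ t := h1
      _ ≤ t ^ (1 - δ) := h2
      _ ≤ 6 * t ^ (1 - δ) := by linarith
  · push_neg at hcase  -- ρ ζ < d
    set u : ℝ := d / ρ ζ with hudef
    set v : ℝ := d / ρ z with hvdef
    have hu1 : 1 < u := (one_lt_div hρζ).mpr hcase
    have hv1 : 1 ≤ v := (one_le_div hρz).mpr hdz
    have hu0 : 0 < u := by linarith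
    have hv0 : 0 < v := by linarith
    set n : ℕ := ⌊Real.logb 2 (2 * u)⌋₊ with hndef
    set m : ℕ := ⌈Real.logb 2 (3 * v)⌉₊ with hmdef
    have h2u : (1:ℝ) < 2 * u := by linarith
    have h3v : (1:ℝ) ≤ 3 * v := by linarith
    -- 2^n ≤ 2u
    have hn_le : (2:ℝ) ^ n ≤ 2 * u := by
      have h := Nat.floor_le (Real.logb_nonneg (b := 2) (by norm_num) h2u.le)
      calc (2:ℝ) ^ n = (2:ℝ) ^ (n:ℝ) := by rw [Real.rpow_natCast]
        _ ≤ (2:ℝ) ^ Real.logb 2 (2 * u) :=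
            Real.rpow_le_rpow_of_exponent_le (by norm_num) h
        _ = 2 * u := Real.rpow_logb (by norm_num) (by norm_num) (by linarith : (0:ℝ) < 2 * u)
    -- n ≥ logb 2 (2u) - 1
    have hn_ge : Real.logb 2 (2 * u) - 1 ≤ (n:ℝ) := by
      have := Nat.lt_floor_add_one (Real.logb 2 (2 * u))
      linarith
    -- 3v ≤ 2^m
    have hm_ge : 3 * v ≤ (2:ℝ) ^ m := by
      have h := Nat.le_ceil (Real.logb 2 (3 * v))
      calc (3:ℝ) * v = (2:ℝ) ^ Real.logb 2 (3 * v) :=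
            (Real.rpow_logb (by norm_num) (by norm_num) (by linarith : (0:ℝ) < 3 * v)).symm
        _ ≤ (2:ℝ) ^ (m:ℝ) := Real.rpow_le_rpow_of_exponent_le (by norm_num) h
        _ = (2:ℝ) ^ m := Real.rpow_natCast _ _
    -- m ≤ logb 2 (3v) + 1
    have hm_le : (m:ℝ) ≤ Real.logb 2 (3 * v) + 1 := by
      have := Nat.ceil_lt_add_one (Real.logb_nonneg (b := 2) (by norm_num) h3v)
      linarith
    -- measure chain
    have hsub : ball ζ (2 ^ n * ρ ζ) ⊆ ball z (2 ^ m * ρ z) := by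
      apply ball_subset_ball'
      have hdζz : dist ζ z = d := by
        rw [dist_eq_norm, ← norm_neg, neg_sub]
      rw [hdζz]
      have h1 : (2:ℝ) ^ n * ρ ζ ≤ 2 * d := by
        have := mul_le_mul_of_nonneg_right hn_le hρζ.le
        rw [hudef] at this
        calc (2:ℝ) ^ n * ρ ζ ≤ 2 * (d / ρ ζ) * ρ ζ := this
          _ = 2 * d := by field_simp
      have h2 : 3 * d ≤ (2:ℝ) ^ m * ρ z := by
        have := mul_le_mul_of_nonneg_right hm_ge hρz.le
        calc 3 * d = 3 * (d / ρ z) * ρ z := by field_simp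
          _ ≤ (2:ℝ) ^ m * ρ z := this
      linarith
    have hkey : ENNReal.ofReal a ^ n ≤ ENNReal.ofReal A ^ m := by
      calc ENNReal.ofReal a ^ n = ENNReal.ofReal a ^ n * μ (ball ζ (ρ ζ)) := by
            rw [hμζ, mul_one]
        _ ≤ μ (ball ζ (2 ^ n * ρ ζ)) := reverse_pow hA0 hD ζ (ρ ζ) hρζ n
        _ ≤ μ (ball z (2 ^ m * ρ z)) := measure_mono hsub
        _ ≤ ENNReal.ofReal A ^ m * μ (ball z (ρ z)) := doubling_pow hD z (ρ z) hρz m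
        _ = ENNReal.ofReal A ^ m := by rw [hμz, mul_one]
    have hreal : a ^ n ≤ A ^ m := by
      rw [← ENNReal.ofReal_pow (by linarith), ← ENNReal.ofReal_pow hA0.le] at hkey
      exact (ENNReal.ofReal_le_ofReal_iff (by positivity)).mp hkey
    have hlog : (n:ℝ) * Real.log a ≤ (m:ℝ) * Real.log A := by
      have h := Real.log_le_log (by positivity) hreal
      rwa [Real.log_pow, Real.log_pow] at h
    -- translate
    have hlog2 : (0:ℝ) < Real.log 2 := Real.log_pos (by norm_num)
    have hx1 : Real.logb 2 (2 * u) - 1 = Real.logb 2 u := by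
      have e : Real.logb 2 (2 * u) = Real.logb 2 2 + Real.logb 2 u :=
        Real.logb_mul (by norm_num) (by positivity)
      rw [e, Real.logb_self_eq_one (by norm_num : (1:ℝ) < 2)]
      ring
    have hx2 : Real.logb 2 (3 * v) + 1 = Real.logb 2 (6 * v) := by
      have e : Real.logb 2 (6 * v) = Real.logb 2 2 + Real.logb 2 (3 * v) := by
        rw [show (6:ℝ) * v = 2 * (3 * v) by ring]
        exact Real.logb_mul (by norm_num) (by positivity)
      rw [e, Real.logb_self_eq_one (by norm_num : (1:ℝ) < 2)]
      ring
    have hchain : Real.logb 2 u * Real.log a ≤ Real.logb 2 (6 * v) * Real.log A := by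
      have l1 : Real.logb 2 u * Real.log a ≤ (n:ℝ) * Real.log a := by
        apply mul_le_mul_of_nonneg_right _ hloga.le
        rw [← hx1]; exact hn_ge
      have l2 : (m:ℝ) * Real.log A ≤ Real.logb 2 (6 * v) * Real.log A := by
        apply mul_le_mul_of_nonneg_right _ hlogA.le
        rw [← hx2]; exact hm_le
      linarith
    have hchain' : Real.log u * Real.log a ≤ Real.log (6 * v) * Real.log A := by
      have h := hchain
      rw [Real.logb, Real.logb, div_mul_eq_mul_div, div_mul_eq_mul_div] at h
      have h2 := mul_le_mul_of_nonneg_right h hlog2.le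
      rwa [div_mul_cancel₀ _ hlog2.ne', div_mul_cancel₀ _ hlog2.ne'] at h2
    have hδlog : δ * Real.log u ≤ Real.log (6 * v) := by
      rw [hδdef, div_mul_eq_mul_div, div_le_iff₀ hlogA]
      calc Real.log a * Real.log u = Real.log u * Real.log a := mul_comm _ _
        _ ≤ Real.log (6 * v) * Real.log A := hchain'
    have hpow : u ^ δ ≤ 6 * v := by
      have h1 : u ^ δ = Real.exp (δ * Real.log u) := by
        rw [Real.rpow_def_of_pos hu0, mul_comm]
      have h2 : 6 * v = Real.exp (Real.log (6 * v)) := by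
        rw [Real.exp_log (by positivity)]
      rw [h1, h2]
      exact Real.exp_le_exp.mpr hδlog
    -- conclude
    have hP0 : 0 < u ^ δ := Real.rpow_pos_of_pos hu0 _
    have hfin : ρ z / ρ ζ ≤ 6 * u / u ^ δ := by
      rw [div_le_div_iff₀ hρζ hP0]
      have e1 : ρ z * (6 * v) = 6 * d := by rw [hvdef]; field_simp; try ring
      have e2 : 6 * u * ρ ζ = 6 * d := by rw [hudef]; field_simp; try ring
      calc ρ z * u ^ δ ≤ ρ z * (6 * v) := mul_le_mul_of_nonneg_left hpow hρz.le
        _ = 6 * d := e1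
        _ = 6 * u * ρ ζ := e2.symm
    calc ρ z / ρ ζ ≤ 6 * u / u ^ δ := hfin
      _ = 6 * (u ^ (1 - δ)) := by
          rw [Real.rpow_sub hu0, Real.rpow_one, mul_div_assoc]
      _ = 6 * (d / ρ ζ) ^ (1 - δ) := by rw [hudef]
end
end
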